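/- Monotonicity of departures in arrivals: if A ≤ A' pointwise (two arrival processes ℤ → ℕ) then the cumulative departures satisfy ∑_{r=m}^{n} D(A,S)(r) ≤ ∑_{r=m}^{n} D(A',S)(r) for queues started empty (A, A' vanishing before some common time), for any fixed service process S and any m ≤ n. -/

import Mathlib

/-- Queue length at time `n` for arrivals `A` and services `S`. -/
noncomputable def qX (A S : ℤ → ℕ) (n : ℤ) : ℕ∞ :=
  ⨆ (m : ℤ) (_ : m ≤ n), ((∑ r ∈ Finset.Ico m n, ((A r : ℤ) - (S r : ℤ))).toNat : ℕ∞)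

/-- Departures at time `n`: `min(X(n) + A(n), S(n))`, with `min(∞, s) = s`. -/
noncomputable def qD (A S : ℤ → ℕ) (n : ℤ) : ℕ :=
  (min (qX A S n + (A n : ℕ∞)) ((S n : ℕ∞))).toNat

/-!
Once the arrivals vanish before `t₀`, the supremum defining the queue length `X` only needs
`t₀ ≤ m ≤ n`, so `X` is a natural number obeying Lindley's recursion `X(n+1) = X(n) + A(n) - S(n)`
and `D(n) = min(X(n) + A(n), S(n))`. As `X(n+1) + D(n) = X(n) + A(n)`, the departures over a
window `[m, t)` are `X(m) + A[m, t) - X(t)`. Raising the arrivals raises `X(m)` and `A[m, t)`,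
and raises `X(t)` by at most the increase of `X(m) + A[m, t)`, since `x ↦ x - s` is monotone and
`1`-Lipschitz on `ℕ`.
-/

open Finset

theorem Finset.sum_Ico_add_one_right {α M : Type*} [LinearOrder α] [One α] [Add α]
    [LocallyFiniteOrder α] [SuccAddOrder α] [NoMaxOrder α] [AddCommMonoid M] {m n : α}
    (h : m ≤ n) (f : α → M) : ∑ r ∈ Ico m (n + 1), f r = ∑ r ∈ Ico m n, f r + f n := by
  rw [← insert_Ico_right_eq_Ico_add_one h, sum_insert right_notMem_Ico, add_comm]

section Lindley

variable {q q' a a' s : ℤ → ℕ} {m : ℤ}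

theorem sum_min_add_eq_add_sum (hq : ∀ n, m ≤ n → q (n + 1) = q n + a n - s n) :
    ∀ t, m ≤ t → ∑ r ∈ Ico m t, min (q r + a r) (s r) + q t = q m + ∑ r ∈ Ico m t, a r := by
  intro t hmt
  induction t, hmt using Int.leInduction with
  | base => simp
  | succ t hmt ih =>
    rw [sum_Ico_add_one_right hmt, sum_Ico_add_one_right hmt, hq t hmt]
    omega

-- In `ℤ`: `q' t - q t ≤ (q' m - q m) + ∑ r ∈ Ico m t, (a' r - a r)`.
theorem lindley_gap_le (hq : ∀ n, m ≤ n → q (n + 1) = q n + a n - s n)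
    (hq' : ∀ n, m ≤ n → q' (n + 1) = q' n + a' n - s n)
    (ha : ∀ n, a n ≤ a' n) (hqq : ∀ n, m ≤ n → q n ≤ q' n) :
    ∀ t, m ≤ t → q' t + (∑ r ∈ Ico m t, a r + q m) ≤ q t + (∑ r ∈ Ico m t, a' r + q' m) := by
  intro t hmt
  induction t, hmt using Int.leInduction with
  | base => simp [add_comm]
  | succ t hmt ih =>
    rw [sum_Ico_add_one_right hmt, sum_Ico_add_one_right hmt, hq t hmt, hq' t hmt]
    have := ha t
    have := hqq t hmt
    omega

theorem sum_min_le_sum_min (hq : ∀ n, m ≤ n → q (n + 1) = q n + a n - s n)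
    (hq' : ∀ n, m ≤ n → q' (n + 1) = q' n + a' n - s n)
    (ha : ∀ n, a n ≤ a' n) (hqq : ∀ n, m ≤ n → q n ≤ q' n) (t : ℤ) (hmt : m ≤ t) :
    ∑ r ∈ Ico m t, min (q r + a r) (s r) ≤ ∑ r ∈ Ico m t, min (q' r + a' r) (s r) := by
  have := sum_min_add_eq_add_sum hq t hmt
  have := sum_min_add_eq_add_sum hq' t hmt
  have := lindley_gap_le hq hq' ha hqq t hmt
  omega

end Lindley

noncomputable def netInput (A S : ℤ → ℕ) (m n : ℤ) : ℤ :=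
  ∑ r ∈ Ico m n, ((A r : ℤ) - (S r : ℤ))

/-- The queue length of a system that is empty at time `t₀`. -/
noncomputable def queueFrom (A S : ℤ → ℕ) (t₀ n : ℤ) : ℕ :=
  (Icc t₀ n).sup fun m ↦ (netInput A S m n).toNat

section Queue

variable {A A' S : ℤ → ℕ} {t₀ : ℤ}

theorem netInput_add_one_right {m n : ℤ} (h : m ≤ n) :
    netInput A S m (n + 1) = netInput A S m n + ((A n : ℤ) - S n) :=
  sum_Ico_add_one_right h _

theorem toNat_netInput_le_queueFrom {m n : ℤ} (ht₀ : t₀ ≤ m) (hn : m ≤ n) :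
    (netInput A S m n).toNat ≤ queueFrom A S t₀ n :=
  le_sup (f := fun m ↦ (netInput A S m n).toNat) (mem_Icc.mpr ⟨ht₀, hn⟩)

theorem exists_queueFrom_eq {n : ℤ} (hn : t₀ ≤ n) :
    ∃ m, t₀ ≤ m ∧ m ≤ n ∧ queueFrom A S t₀ n = (netInput A S m n).toNat := by
  obtain ⟨m, hm, hsup⟩ := exists_mem_eq_sup _ (nonempty_Icc.mpr hn)
    fun m ↦ (netInput A S m n).toNat
  exact ⟨m, (mem_Icc.mp hm).1, (mem_Icc.mp hm).2, hsup⟩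

theorem queueFrom_add_one {n : ℤ} (hn : t₀ ≤ n) :
    queueFrom A S t₀ (n + 1) = queueFrom A S t₀ n + A n - S n := by
  apply le_antisymm
  · refine Finset.sup_le fun m hm ↦ ?_
    obtain ⟨ht₀m, hmn⟩ := mem_Icc.mp hm
    rcases Int.le_add_one_iff.mp hmn with hmn | rfl
    · rw [netInput_add_one_right hmn]
      have := toNat_netInput_le_queueFrom (A := A) (S := S) ht₀m hmn
      omega
    · simp [netInput]
  · obtain ⟨m, ht₀m, hmn, hq⟩ := exists_queueFrom_eq (A := A) (S := S) hn
    -- the maximiser `m` of `X(n)` handles a nonempty queue, the window `[n, n + 1)` an empty one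
    have hmax := toNat_netInput_le_queueFrom (A := A) (S := S) ht₀m (Int.le_add_one hmn)
    have hlast := toNat_netInput_le_queueFrom (A := A) (S := S) hn (Int.le_add_one le_rfl)
    rw [netInput_add_one_right hmn] at hmax
    rw [netInput_add_one_right le_rfl] at hlast
    simp only [netInput, Ico_self, sum_empty, zero_add] at hlast
    omega

theorem queueFrom_mono (hle : ∀ n, A n ≤ A' n) (n : ℤ) :
    queueFrom A S t₀ n ≤ queueFrom A' S t₀ n :=
  sup_mono_fun fun m _ ↦ Int.toNat_le_toNat <| sum_le_sum fun r _ ↦ by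
    have := hle r
    omega

theorem qX_eq_queueFrom (h0 : ∀ r, r < t₀ → A r = 0) {n : ℤ} (hn : t₀ ≤ n) :
    qX A S n = queueFrom A S t₀ n := by
  apply le_antisymm
  · refine iSup₂_le fun m hmn ↦ ?_
    rcases le_total t₀ m with ht₀m | hmt₀
    · exact Nat.cast_le.mpr (toNat_netInput_le_queueFrom ht₀m hmn)
    · have hdrop : netInput A S m n ≤ netInput A S t₀ n :=
        sum_le_sum_of_subset_of_nonpos' (Ico_subset_Ico_left hmt₀) fun r _ hr ↦ by
          rw [h0 r (by simp_all)]
          simp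
      exact Nat.cast_le.mpr ((Int.toNat_le_toNat hdrop).trans
        (toNat_netInput_le_queueFrom le_rfl hn))
  · obtain ⟨m, -, hmn, hq⟩ := exists_queueFrom_eq (A := A) (S := S) hn
    rw [hq]
    exact le_iSup₂_of_le (f := fun m _ ↦ ((netInput A S m n).toNat : ℕ∞)) m hmn le_rfl

theorem qD_eq_min_queueFrom (h0 : ∀ r, r < t₀ → A r = 0) {n : ℤ} (hn : t₀ ≤ n) :
    qD A S n = min (queueFrom A S t₀ n + A n) (S n) := by
  rw [qD, qX_eq_queueFrom h0 hn, ← Nat.cast_add, ← Nat.mono_cast.map_min, ENat.toNat_natCast]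

end Queue

/-- Monotonicity of departures in arrivals: if `A ≤ A'` pointwise and both vanish
before some common time, then cumulative departures for `A` are dominated by
those for `A'`, over any window `{m,…,n}`. -/
theorem departures_monotone_in_arrivals (A A' S : ℤ → ℕ)
    (h0 : ∃ t₀ : ℤ, ∀ n : ℤ, n < t₀ → A n = 0 ∧ A' n = 0)
    (hle : ∀ n : ℤ, A n ≤ A' n) :
    ∀ m n : ℤ, m ≤ n →
      ∑ r ∈ Finset.Icc m n, qD A S r ≤ ∑ r ∈ Finset.Icc m n, qD A' S r := by
  intro m n hmn
  obtain ⟨t₀, ht₀⟩ := h0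
  -- the queues are still empty at `t₁ = min t₀ m`, and the whole window lies after `t₁`
  set t₁ := min t₀ m
  have h0A : ∀ r, r < t₁ → A r = 0 := fun r hr ↦ (ht₀ r (hr.trans_le (min_le_left _ _))).1
  have h0A' : ∀ r, r < t₁ → A' r = 0 := fun r hr ↦ (ht₀ r (hr.trans_le (min_le_left _ _))).2
  have ht₁ : ∀ r ∈ Ico m (n + 1), t₁ ≤ r := fun r hr ↦ (min_le_right _ _).trans (mem_Ico.mp hr).1
  rw [← Ico_add_one_right_eq_Icc, sum_congr rfl fun r hr ↦ qD_eq_min_queueFrom h0A (ht₁ r hr),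
    sum_congr rfl fun r hr ↦ qD_eq_min_queueFrom h0A' (ht₁ r hr)]
  exact sum_min_le_sum_min (fun k hk ↦ queueFrom_add_one ((min_le_right _ _).trans hk))
    (fun k hk ↦ queueFrom_add_one ((min_le_right _ _).trans hk)) hle
    (fun k _ ↦ queueFrom_mono hle k) (n + 1) (by omega)
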